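/- arXiv:0808.3219 — 2 statements merged into one kernel-verified Lean document; each statement's English description precedes it below -/
import Mathlib

section
/- For hyperbolic functions F, G on Ω with Im(conj(F)G) nowhere vanishing, a C¹ hyperbolic function w = φF + ψG (φ, ψ real-valued) satisfies φ_z̄ F + ψ_z̄ G = 0 if and only if w satisfies the hyperbolic Vekua equation w_z̄ = a_{(F,G)} w + b_{(F,G)} conj(w), where a_{(F,G)} = −(conj(F)G_z̄ − F_z̄ conj(G))/(F conj(G) − conj(F) G) and b_{(F,G)} = (F G_z̄ − F_z̄ G)/(F conj(G) − conj(F) G). -/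
/-- Hyperbolic (split-complex / duplex) numbers `x + j t`, with `j ^ 2 = 1`. -/
structure Hyp where
  re : ℝ
  im : ℝ

namespace Hyp

instance : Zero Hyp := ⟨⟨0, 0⟩⟩
instance : One Hyp := ⟨⟨1, 0⟩⟩
instance : Add Hyp := ⟨fun z w => ⟨z.re + w.re, z.im + w.im⟩⟩
instance : Neg Hyp := ⟨fun z => ⟨-z.re, -z.im⟩⟩
instance : Sub Hyp := ⟨fun z w => ⟨z.re - w.re, z.im - w.im⟩⟩
/-- multiplication determined by `j ^ 2 = 1` -/
instance : Mul Hyp := ⟨fun z w => ⟨z.re * w.re + z.im * w.im, z.re * w.im + z.im * w.re⟩⟩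
instance : SMul ℝ Hyp := ⟨fun r z => ⟨r * z.re, r * z.im⟩⟩

/-- the hyperbolic imaginary unit `j` -/
def j : Hyp := ⟨0, 1⟩

/-- hyperbolic conjugation `conj (x + j t) = x - j t` -/
def conj (z : Hyp) : Hyp := ⟨z.re, -z.im⟩

/-- the (total) inverse; for non-invertible elements it returns junk -/
noncomputable instance : Inv Hyp := ⟨fun z => ⟨z.re / (z.re ^ 2 - z.im ^ 2), -z.im / (z.re ^ 2 - z.im ^ 2)⟩⟩
noncomputable instance : Div Hyp := ⟨fun z w => z * w⁻¹⟩

end Hyp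

/-- partial derivative in the `x`-direction -/
noncomputable def px (f : ℝ × ℝ → ℝ) (p : ℝ × ℝ) : ℝ := fderiv ℝ f p (1, 0)

/-- partial derivative in the `t`-direction -/
noncomputable def pt (f : ℝ × ℝ → ℝ) (p : ℝ × ℝ) : ℝ := fderiv ℝ f p (0, 1)

/-- real part of a hyperbolic-valued function -/
def reP (f : ℝ × ℝ → Hyp) : ℝ × ℝ → ℝ := fun q => (f q).re
/-- imaginary (`j`) part of a hyperbolic-valued function -/
def imP (f : ℝ × ℝ → Hyp) : ℝ × ℝ → ℝ := fun q => (f q).im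

/-- `∂_z̄ = (1/2)(∂_x - j ∂_t)` acting on `f = u + j v`:
`(1/2)((u_x - v_t) + j (v_x - u_t))`. -/
noncomputable def dzbar (f : ℝ × ℝ → Hyp) (p : ℝ × ℝ) : Hyp :=
  ⟨(px (reP f) p - pt (imP f) p) / 2, (px (imP f) p - pt (reP f) p) / 2⟩

/-- `∂_z = (1/2)(∂_x + j ∂_t)` acting on `f = u + j v`:
`(1/2)((u_x + v_t) + j (v_x + u_t))`. -/
noncomputable def dz (f : ℝ × ℝ → Hyp) (p : ℝ × ℝ) : Hyp :=
  ⟨(px (reP f) p + pt (imP f) p) / 2, (px (imP f) p + pt (reP f) p) / 2⟩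

/-- `∂_z̄` of a real-valued function, as a hyperbolic number. -/
noncomputable def dzbarR (φ : ℝ × ℝ → ℝ) (p : ℝ × ℝ) : Hyp :=
  ⟨px φ p / 2, -(pt φ p) / 2⟩

/-- a function is C¹ (componentwise) -/
def HC1 (f : ℝ × ℝ → Hyp) : Prop := ContDiff ℝ 1 (reP f) ∧ ContDiff ℝ 1 (imP f)

/-- characteristic coefficient `a_{(F,G)}` -/
noncomputable def charA (F G : ℝ × ℝ → Hyp) (p : ℝ × ℝ) : Hyp :=
  -((Hyp.conj (F p) * dzbar G p - dzbar F p * Hyp.conj (G p)) /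
    (F p * Hyp.conj (G p) - Hyp.conj (F p) * G p))

/-- characteristic coefficient `b_{(F,G)}` -/
noncomputable def charB (F G : ℝ × ℝ → Hyp) (p : ℝ × ℝ) : Hyp :=
  (F p * dzbar G p - dzbar F p * G p) /
    (F p * Hyp.conj (G p) - Hyp.conj (F p) * G p)

/-- characteristic coefficient `A_{(F,G)}` -/
noncomputable def charCapA (F G : ℝ × ℝ → Hyp) (p : ℝ × ℝ) : Hyp :=
  -((Hyp.conj (F p) * dz G p - dz F p * Hyp.conj (G p)) /
    (F p * Hyp.conj (G p) - Hyp.conj (F p) * G p))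

/-- characteristic coefficient `B_{(F,G)}` -/
noncomputable def charCapB (F G : ℝ × ℝ → Hyp) (p : ℝ × ℝ) : Hyp :=
  (F p * dz G p - dz F p * G p) /
    (F p * Hyp.conj (G p) - Hyp.conj (F p) * G p)

/-
Near each point `w = φ F + ψ G`, so the Leibniz rule splits `w_z̄` into `φ_z̄ F + ψ_z̄ G` plus
`φ F_z̄ + ψ G_z̄`. The coefficients `a_{(F,G)}, b_{(F,G)}` are the Cramer solution of the system
`a F + b conj F = F_z̄`, `a G + b conj G = G_z̄`, whose determinant `F conj G - conj F G` is invertible;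
as `φ, ψ` are real, `a w + b conj w = φ F_z̄ + ψ G_z̄`. Hence the Vekua equation for `w` says exactly
that the first summand vanishes.
-/

attribute [ext] Hyp

namespace Hyp

@[simp] theorem add_re (z w : Hyp) : (z + w).re = z.re + w.re := rfl
@[simp] theorem add_im (z w : Hyp) : (z + w).im = z.im + w.im := rfl
@[simp] theorem sub_re (z w : Hyp) : (z - w).re = z.re - w.re := rfl
@[simp] theorem sub_im (z w : Hyp) : (z - w).im = z.im - w.im := rfl
@[simp] theorem neg_re (z : Hyp) : (-z).re = -z.re := rfl
@[simp] theorem neg_im (z : Hyp) : (-z).im = -z.im := rfl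
@[simp] theorem mul_re (z w : Hyp) : (z * w).re = z.re * w.re + z.im * w.im := rfl
@[simp] theorem mul_im (z w : Hyp) : (z * w).im = z.re * w.im + z.im * w.re := rfl
@[simp] theorem smul_re (r : ℝ) (z : Hyp) : (r • z).re = r * z.re := rfl
@[simp] theorem smul_im (r : ℝ) (z : Hyp) : (r • z).im = r * z.im := rfl
@[simp] theorem conj_re (z : Hyp) : (conj z).re = z.re := rfl
@[simp] theorem conj_im (z : Hyp) : (conj z).im = -z.im := rfl
@[simp] theorem zero_re : (0 : Hyp).re = 0 := rfl
@[simp] theorem zero_im : (0 : Hyp).im = 0 := rfl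

theorem add_eq_right {z w : Hyp} : z + w = w ↔ z = 0 := by
  constructor
  · intro h
    ext
    · simpa using congrArg re h
    · simpa using congrArg im h
  · rintro rfl
    ext <;> simp

theorem mul_conj_sub_conj_mul (F G : Hyp) : F * conj G - conj F * G = ⟨0, -2 * (conj F * G).im⟩ := by
  ext
  · simp
  · simp only [sub_im, mul_im, conj_re, conj_im]
    ring

theorem inv_pure_j (d : ℝ) : (⟨0, d⟩ : Hyp)⁻¹ = ⟨0, d⁻¹⟩ := by
  show (⟨0 / (0 ^ 2 - d ^ 2), -d / (0 ^ 2 - d ^ 2)⟩ : Hyp) = _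
  rcases eq_or_ne d 0 with rfl | hd
  · simp
  · ext
    · simp
    · field_simp
      ring

theorem div_pure_j (z : Hyp) (d : ℝ) : z / (⟨0, d⟩ : Hyp) = ⟨z.im / d, z.re / d⟩ := by
  show z * (⟨0, d⟩ : Hyp)⁻¹ = _
  rw [inv_pure_j]
  ext <;> simp [div_eq_mul_inv]

section Cramer

variable (F G Fz Gz : Hyp)

/- Both numerators collapse to a multiple of the determinant, e.g.
`-(conj F Gz - Fz conj G) F + (F Gz - Fz G) conj F = Fz (F conj G - conj F G)`. -/

theorem cramer_left (h : (conj F * G).im ≠ 0) :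
    -((conj F * Gz - Fz * conj G) / (F * conj G - conj F * G)) * F
      + (F * Gz - Fz * G) / (F * conj G - conj F * G) * conj F = Fz := by
  rw [mul_conj_sub_conj_mul, div_pure_j, div_pure_j]
  generalize hd : (conj F * G).im = d at h ⊢
  simp only [mul_im, conj_re, conj_im] at hd
  ext <;> simp only [add_re, add_im, sub_re, sub_im, neg_re, neg_im, mul_re, mul_im, conj_re,
    conj_im] <;> field_simp <;> subst hd <;> ring

theorem cramer_right (h : (conj F * G).im ≠ 0) :
    -((conj F * Gz - Fz * conj G) / (F * conj G - conj F * G)) * G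
      + (F * Gz - Fz * G) / (F * conj G - conj F * G) * conj G = Gz := by
  rw [mul_conj_sub_conj_mul, div_pure_j, div_pure_j]
  generalize hd : (conj F * G).im = d at h ⊢
  simp only [mul_im, conj_re, conj_im] at hd
  ext <;> simp only [add_re, add_im, sub_re, sub_im, neg_re, neg_im, mul_re, mul_im, conj_re,
    conj_im] <;> field_simp <;> subst hd <;> ring

end Cramer

theorem mul_add_mul_conj_smul_add_smul (a b F G : Hyp) (r s : ℝ) :
    a * (r • F + s • G) + b * conj (r • F + s • G)
      = r • (a * F + b * conj F) + s • (a * G + b * conj G) := by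
  ext <;> simp <;> ring

end Hyp

open Hyp Topology

theorem charA_mul_add_charB_mul_conj {F G w : ℝ × ℝ → Hyp} {φ ψ : ℝ × ℝ → ℝ} {p : ℝ × ℝ}
    (hFG : (conj (F p) * G p).im ≠ 0) (hw : w p = φ p • F p + ψ p • G p) :
    charA F G p * w p + charB F G p * conj (w p) = φ p • dzbar F p + ψ p • dzbar G p := by
  rw [hw, mul_add_mul_conj_smul_add_smul, charA, charB, cramer_left _ _ _ _ hFG,
    cramer_right _ _ _ _ hFG]

section Leibniz

variable {f g : ℝ × ℝ → ℝ} {p : ℝ × ℝ}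

theorem px_add (hf : DifferentiableAt ℝ f p) (hg : DifferentiableAt ℝ g p) :
    px (fun q => f q + g q) p = px f p + px g p := by
  simp [px, fderiv_fun_add hf hg]

theorem pt_add (hf : DifferentiableAt ℝ f p) (hg : DifferentiableAt ℝ g p) :
    pt (fun q => f q + g q) p = pt f p + pt g p := by
  simp [pt, fderiv_fun_add hf hg]

theorem px_mul (hf : DifferentiableAt ℝ f p) (hg : DifferentiableAt ℝ g p) :
    px (fun q => f q * g q) p = px f p * g p + f p * px g p := by
  simp only [px, fderiv_fun_mul hf hg, add_apply, smul_apply, smul_eq_mul]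
  ring

theorem pt_mul (hf : DifferentiableAt ℝ f p) (hg : DifferentiableAt ℝ g p) :
    pt (fun q => f q * g q) p = pt f p * g p + f p * pt g p := by
  simp only [pt, fderiv_fun_mul hf hg, add_apply, smul_apply, smul_eq_mul]
  ring

end Leibniz

theorem dzbar_congr {f g : ℝ × ℝ → Hyp} {p : ℝ × ℝ} (h : f =ᶠ[𝓝 p] g) : dzbar f p = dzbar g p := by
  have hre : reP f =ᶠ[𝓝 p] reP g := h.mono fun q hq => congrArg re hq
  have him : imP f =ᶠ[𝓝 p] imP g := h.mono fun q hq => congrArg im hq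
  simp only [dzbar, px, pt, hre.fderiv_eq, him.fderiv_eq]

theorem dzbar_smul_add_smul {F G : ℝ × ℝ → Hyp} {φ ψ : ℝ × ℝ → ℝ} {p : ℝ × ℝ}
    (hφ : DifferentiableAt ℝ φ p) (hψ : DifferentiableAt ℝ ψ p)
    (hFre : DifferentiableAt ℝ (reP F) p) (hFim : DifferentiableAt ℝ (imP F) p)
    (hGre : DifferentiableAt ℝ (reP G) p) (hGim : DifferentiableAt ℝ (imP G) p) :
    dzbar (fun q => φ q • F q + ψ q • G q) p
      = dzbarR φ p * F p + dzbarR ψ p * G p + (φ p • dzbar F p + ψ p • dzbar G p) := by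
  have hre : reP (fun q => φ q • F q + ψ q • G q) = fun q => φ q * reP F q + ψ q * reP G q := rfl
  have him : imP (fun q => φ q • F q + ψ q • G q) = fun q => φ q * imP F q + ψ q * imP G q := rfl
  ext
  · simp only [dzbar, dzbarR, hre, him, px_add (hφ.fun_mul hFre) (hψ.fun_mul hGre),
      pt_add (hφ.fun_mul hFim) (hψ.fun_mul hGim), px_mul hφ hFre, px_mul hψ hGre, pt_mul hφ hFim,
      pt_mul hψ hGim, add_re, mul_re, smul_re]
    simp only [reP, imP]
    ring
  · simp only [dzbar, dzbarR, hre, him, px_add (hφ.fun_mul hFim) (hψ.fun_mul hGim),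
      pt_add (hφ.fun_mul hFre) (hψ.fun_mul hGre), px_mul hφ hFim, px_mul hψ hGim, pt_mul hφ hFre,
      pt_mul hψ hGre, add_im, mul_im, smul_im]
    simp only [reP, imP]
    ring

/-- for `w = φF + ψG` (C¹), `φ_z̄ F + ψ_z̄ G = 0` iff `w` satisfies the
hyperbolic Vekua equation `w_z̄ = a_{(F,G)} w + b_{(F,G)} conj w`. -/
theorem vekua_iff_phi_psi_equation (Ω : Set (ℝ × ℝ)) (hΩ : IsOpen Ω)
    (F G : ℝ × ℝ → Hyp) (φ ψ : ℝ × ℝ → ℝ)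
    (hFre : ContDiffOn ℝ 1 (reP F) Ω) (hFim : ContDiffOn ℝ 1 (imP F) Ω)
    (hGre : ContDiffOn ℝ 1 (reP G) Ω) (hGim : ContDiffOn ℝ 1 (imP G) Ω)
    (hφ : ContDiffOn ℝ 1 φ Ω) (hψ : ContDiffOn ℝ 1 ψ Ω)
    (hFG : ∀ p ∈ Ω, (Hyp.conj (F p) * G p).im ≠ 0)
    (w : ℝ × ℝ → Hyp) (hw : ∀ p ∈ Ω, w p = φ p • F p + ψ p • G p) :
    ∀ p ∈ Ω,
      (dzbarR φ p * F p + dzbarR ψ p * G p = 0 ↔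
        dzbar w p = charA F G p * w p + charB F G p * Hyp.conj (w p)) := by
  intro p hp
  have hΩp : Ω ∈ 𝓝 p := hΩ.mem_nhds hp
  have diff {f : ℝ × ℝ → ℝ} (hf : ContDiffOn ℝ 1 f Ω) : DifferentiableAt ℝ f p :=
    (hf.differentiableOn one_ne_zero).differentiableAt hΩp
  have hw_near : w =ᶠ[𝓝 p] fun q => φ q • F q + ψ q • G q :=
    Filter.mem_of_superset hΩp hw
  rw [dzbar_congr hw_near, dzbar_smul_add_smul (diff hφ) (diff hψ) (diff hFre) (diff hFim)
    (diff hGre) (diff hGim), charA_mul_add_charB_mul_conj (hFG p hp) (hw p hp), add_eq_right]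
end

section
/- Let F = cos S(x) − j sin S(x), G = sin S(x) + j cos S(x) with S' = s, and for z₀ = x₀ + jt₀ set α = cos S(x₀), β = sin S(x₀). For a = a₁ + j a₂, define Z⁽⁰⁾(a,z₀;z) = (a₁α − a₂β) F(z) + (a₁β + a₂α) G(z). Then Z⁽⁰⁾(a,z₀;z₀) = a, Z⁽⁰⁾(a,z₀;·) satisfies the Vekua equation W_z̄ = −(s(x)j/2) conj(W), and Z⁽⁰⁾(a,z₀;z) → a as z → z₀. -/
/-!
`F` and `G` are the columns of the rotation matrix by the angle `-S(x)`, so the formal power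
`Z⁽⁰⁾(a, z₀; ·)` is `a` rotated by `S(x₀) - S(x)`. It therefore equals `a` at `z₀` and is
continuous. It depends on `x` alone, where `∂_z̄` is half of `d/dx`; and differentiating a
rotation by its angle multiplies by `i`, which on hyperbolic numbers reads `w ↦ j * conj w`.
Since `S' = s`, the chain rule gives the Vekua equation.
-/

open Real

lemma px_comp_fst {g : ℝ → ℝ} {d : ℝ} {p : ℝ × ℝ} (hg : HasDerivAt g d p.1) :
    px (fun q => g q.1) p = d := by
  have h : HasFDerivAt (fun q : ℝ × ℝ => g q.1) ((ContinuousLinearMap.smulRight 1 d).comp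
      (ContinuousLinearMap.fst ℝ ℝ ℝ)) p := hg.hasFDerivAt.comp p hasFDerivAt_fst
  simp [px, h.fderiv]

lemma pt_comp_fst {g : ℝ → ℝ} {p : ℝ × ℝ} (hg : DifferentiableAt ℝ g p.1) :
    pt (fun q => g q.1) p = 0 := by
  have h : HasFDerivAt (fun q : ℝ × ℝ => g q.1) ((fderiv ℝ g p.1).comp
      (ContinuousLinearMap.fst ℝ ℝ ℝ)) p := hg.hasFDerivAt.comp p hasFDerivAt_fst
  simp [pt, h.fderiv]

lemma dzbar_comp_fst {h : ℝ → Hyp} {u v : ℝ} {p : ℝ × ℝ}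
    (hu : HasDerivAt (fun x => (h x).re) u p.1) (hv : HasDerivAt (fun x => (h x).im) v p.1) :
    dzbar (fun q => h q.1) p = ⟨u / 2, v / 2⟩ := by
  have hre : reP (fun q => h q.1) = fun q => (h q.1).re := rfl
  have him : imP (fun q => h q.1) = fun q => (h q.1).im := rfl
  rw [dzbar, hre, him, px_comp_fst hu, px_comp_fst hv, pt_comp_fst hu.differentiableAt,
    pt_comp_fst hv.differentiableAt, sub_zero, sub_zero]

noncomputable def rot (θ : ℝ) (a : Hyp) : Hyp :=
  ⟨a.re * cos θ - a.im * sin θ, a.re * sin θ + a.im * cos θ⟩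

@[simp]
lemma rot_zero (a : Hyp) : rot 0 a = a := by
  ext <;> simp [rot]

lemma rot_sub (θ₀ θ : ℝ) (a : Hyp) :
    rot (θ₀ - θ) a = (rot θ₀ a).re • (⟨cos θ, -sin θ⟩ : Hyp) + (rot θ₀ a).im • ⟨sin θ, cos θ⟩ := by
  ext <;> simp only [rot, cos_sub, sin_sub] <;> change _ = _ * _ + _ * _ <;> ring

lemma continuous_rot_re (a : Hyp) : Continuous fun θ => (rot θ a).re := by
  unfold rot; fun_prop

lemma continuous_rot_im (a : Hyp) : Continuous fun θ => (rot θ a).im := by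
  unfold rot; fun_prop

section Derivative

variable {f : ℝ → ℝ} {f' x : ℝ} (a : Hyp) (hf : HasDerivAt f f' x)
include hf

lemma HasDerivAt.rot_re :
    HasDerivAt (fun x => (rot (f x) a).re) (f' * (Hyp.j * Hyp.conj (rot (f x) a)).re) x := by
  refine ((hf.cos.const_mul a.re).sub (hf.sin.const_mul a.im)).congr_deriv ?_
  change _ = _ * (0 * _ + 1 * -_)
  simp only [rot, Hyp.conj]; ring

lemma HasDerivAt.rot_im :
    HasDerivAt (fun x => (rot (f x) a).im) (f' * (Hyp.j * Hyp.conj (rot (f x) a)).im) x := by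
  refine ((hf.sin.const_mul a.re).add (hf.cos.const_mul a.im)).congr_deriv ?_
  change _ = _ * (0 * _ + 1 * _)
  simp only [rot, Hyp.conj]; ring

end Derivative

theorem ZS_formal_power_zero_general (s S : ℝ → ℝ)
    (hS : ∀ x, HasDerivAt S (s x) x)
    (x₀ t₀ a₁ a₂ : ℝ)
    (F G : ℝ × ℝ → Hyp)
    (hF : ∀ p, F p = ⟨Real.cos (S p.1), -Real.sin (S p.1)⟩)
    (hG : ∀ p, G p = ⟨Real.sin (S p.1), Real.cos (S p.1)⟩)
    (Z : ℝ × ℝ → Hyp)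
    (hZ : ∀ p, Z p =
      (a₁ * Real.cos (S x₀) - a₂ * Real.sin (S x₀)) • F p +
      (a₁ * Real.sin (S x₀) + a₂ * Real.cos (S x₀)) • G p) :
    Z (x₀, t₀) = (⟨a₁, a₂⟩ : Hyp) ∧
    (∀ p, dzbar Z p = (-(s p.1) / 2) • (Hyp.j * Hyp.conj (Z p))) ∧
    Filter.Tendsto (fun p => (Z p).re) (nhds (x₀, t₀)) (nhds a₁) ∧
    Filter.Tendsto (fun p => (Z p).im) (nhds (x₀, t₀)) (nhds a₂) := by
  have hZ_rot : Z = fun p => rot (S x₀ - S p.1) ⟨a₁, a₂⟩ := by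
    funext p; rw [hZ, hF, hG, rot_sub]; rfl
  have hZ₀ : Z (x₀, t₀) = ⟨a₁, a₂⟩ := by simp [hZ_rot]
  have hangle : Continuous fun p : ℝ × ℝ => S x₀ - S p.1 :=
    continuous_const.sub ((continuous_iff_continuousAt.2 fun x => (hS x).continuousAt).comp
      continuous_fst)
  refine ⟨hZ₀, fun p => ?_, ?_, ?_⟩
  · have hangle' := (hS p.1).const_sub (S x₀)
    rw [hZ_rot, dzbar_comp_fst (hangle'.rot_re _) (hangle'.rot_im _)]
    ext <;> change _ = _ * _ <;> ring
  · rw [show a₁ = (Z (x₀, t₀)).re by rw [hZ₀], hZ_rot]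
    exact ((continuous_rot_re _).comp hangle).tendsto (x₀, t₀)
  · rw [show a₂ = (Z (x₀, t₀)).im by rw [hZ₀], hZ_rot]
    exact ((continuous_rot_im _).comp hangle).tendsto (x₀, t₀)

/-- the formal power `Z⁽⁰⁾(a, z₀; z) = (a₁α - a₂β) F(z) + (a₁β + a₂α) G(z)`
equals `a` at `z₀`, satisfies the Vekua equation `W_z̄ = -(s(x) j / 2) conj W`, and tends to
`a` as `z → z₀`. -/
theorem ZS_formal_power_zero (s S : ℝ → ℝ) (hs : Continuous s)
    (hS : ∀ x, HasDerivAt S (s x) x)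
    (x₀ t₀ a₁ a₂ : ℝ)
    (F G : ℝ × ℝ → Hyp)
    (hF : ∀ p, F p = ⟨Real.cos (S p.1), -Real.sin (S p.1)⟩)
    (hG : ∀ p, G p = ⟨Real.sin (S p.1), Real.cos (S p.1)⟩)
    (Z : ℝ × ℝ → Hyp)
    (hZ : ∀ p, Z p =
      (a₁ * Real.cos (S x₀) - a₂ * Real.sin (S x₀)) • F p +
      (a₁ * Real.sin (S x₀) + a₂ * Real.cos (S x₀)) • G p) :
    Z (x₀, t₀) = (⟨a₁, a₂⟩ : Hyp) ∧
    (∀ p, dzbar Z p = (-(s p.1) / 2) • (Hyp.j * Hyp.conj (Z p))) ∧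
    Filter.Tendsto (fun p => (Z p).re) (nhds (x₀, t₀)) (nhds a₁) ∧
    Filter.Tendsto (fun p => (Z p).im) (nhds (x₀, t₀)) (nhds a₂) :=
  ZS_formal_power_zero_general s S hS x₀ t₀ a₁ a₂ F G hF hG Z hZ
end
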